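/- Gonzalez farthest-first clustering invariant: at any point of the algorithm, any two centers in L(ε) = {C ∈ L : dist[C] > ε} have pairwise distance greater than ε. -/
import Mathlib

private lemma gonzalez_key {S : Type*} [MetricSpace S]
    (C : ℕ → S) (r : ℕ → ℝ) (ε : ℝ)
    (hr : ∀ k, 0 < k → r k = ⨅ j : Fin k, dist (C k) (C j))
    (i j : ℕ) (hij : i < j) (hj : j = 0 ∨ ε < r j) :
    ε < dist (C i) (C j) := by
  rcases hj with h | h
  · omega
  · have hle : r j ≤ dist (C j) (C i) := by
      rw [hr j (Nat.pos_of_ne_zero (by omega))]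
      exact ciInf_le (Set.Finite.bddBelow (Set.finite_range _)) (⟨i, hij⟩ : Fin j)
    calc ε < r j := h
      _ ≤ dist (C j) (C i) := hle
      _ = dist (C i) (C j) := dist_comm _ _

/-- **Gonzalez farthest-first invariant.** Let `C 0, C 1, …` be the centers
chosen by Gonzalez's algorithm, with insertion radii
`r k = min_{j < k} δ(C k, C j)` (and `r 0 = ∞`, handled by the index-`0`
disjunct). Then any two centers of `L(ε) = {C k : r k > ε}` have pairwise
distance greater than `ε`. -/
theorem gonzalez_separation_invariant {S : Type*} [MetricSpace S]
    (C : ℕ → S) (r : ℕ → ℝ) (ε : ℝ)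
    (hr : ∀ k, 0 < k → r k = ⨅ j : Fin k, dist (C k) (C j))
    (i j : ℕ) (hij : i ≠ j)
    (hi : i = 0 ∨ ε < r i) (hj : j = 0 ∨ ε < r j) :
    ε < dist (C i) (C j) := by
  rcases lt_or_gt_of_ne hij with h | h
  · exact gonzalez_key C r ε hr i j h hj
  · rw [dist_comm]
    exact gonzalez_key C r ε hr j i h hi
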